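/- arXiv:math/0602596 — 6 statements merged into one kernel-verified Lean document; each statement's English description precedes it below -/
import Mathlib

section
/- For integers n, m, t, j, k with n = 2m, 2 ≤ t ≤ m, and n−t < j < n−1, the alternating sum Σ_{k=1}^{n} (−1)^{j+k+t} C(n−k, n−t) C(j+1, k−1) equals 0; and when j = n−1 this sum equals −1. -/
/-- Binomial coefficient for integer arguments, with the convention that
`C a b = 0` when `b < 0` or `b > a`. -/
def C (a b : ℤ) : ℤ := if 0 ≤ b ∧ b ≤ a then (a.toNat.choose b.toNat : ℤ) else 0

lemma C_natCast (a b : ℕ) (h : b ≤ a) : C (a : ℤ) (b : ℤ) = (a.choose b : ℤ) := by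
  rw [C, if_pos ⟨Int.natCast_nonneg b, by exact_mod_cast h⟩]
  simp

lemma C_zero (a b : ℤ) (h : ¬(0 ≤ b ∧ b ≤ a)) : C a b = 0 := if_neg h

/-- `P e c` is the coefficient of `x^c` in `(1-x)^e` for integer `e`. -/
def P (e : ℤ) (c : ℕ) : ℤ :=
  if 0 ≤ e then (-1) ^ c * (e.toNat.choose c : ℤ) else ((c + (-e).toNat - 1).choose c : ℤ)

lemma P_zero (e : ℤ) : P e 0 = 1 := by
  unfold P
  split <;> simp

lemma P_pascal (e : ℤ) (c : ℕ) : P (e + 1) (c + 1) = P e (c + 1) - P e c := by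
  rcases le_or_gt 0 e with he | he
  · have h1 : (0:ℤ) ≤ e + 1 := by omega
    have h2 : (e + 1).toNat = e.toNat + 1 := by omega
    rw [P, P, P, if_pos h1, if_pos he, if_pos he, h2, Nat.choose_succ_succ]
    push_cast
    ring
  · rcases eq_or_lt_of_le (by omega : e ≤ -1) with he1 | he1
    · subst he1
      rw [show (-1 : ℤ) + 1 = 0 by ring]
      rw [P, P, P, if_pos le_rfl, if_neg (by omega), if_neg (by omega)]
      simp [Nat.choose_succ_self]
    · -- e ≤ -2
      have h1 : ¬ (0:ℤ) ≤ e + 1 := by omega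
      have hk : 2 ≤ (-e).toNat := by omega
      rw [P, P, P, if_neg h1, if_neg (by omega), if_neg (by omega)]
      set k := (-e).toNat with hkdef
      have h2 : (-(e+1)).toNat = k - 1 := by omega
      rw [h2]
      have h3 : c + 1 + k - 1 = (c + k - 1) + 1 := by omega
      have h4 : c + 1 + (k - 1) - 1 = c + k - 1 := by omega
      rw [h3, h4, Nat.choose_succ_succ]
      push_cast
      ring

lemma key (M N c : ℕ) :
    ∑ i ∈ Finset.range (c + 1),
      (-1 : ℤ) ^ i * (M.choose i : ℤ) * ((N + c - i).choose N : ℤ)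
      = P ((M : ℤ) - N - 1) c := by
  induction M generalizing c with
  | zero =>
    rw [Finset.sum_eq_single 0]
    · simp only [Nat.cast_zero, Nat.choose_self, pow_zero, Nat.cast_one, one_mul,
        Nat.sub_zero]
      rw [P, if_neg (by omega)]
      have hX : (-((0:ℤ) - ↑N - 1)).toNat = N + 1 := by omega
      rw [hX, show c + (N + 1) - 1 = N + c from by omega,
        show (N + c).choose N = (N + c).choose c from by
          rw [← Nat.choose_symm (by omega : N ≤ N + c)]; congr 1; omega]
    · intro i _ hi
      rw [Nat.choose_eq_zero_of_lt (by omega)]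
      simp
    · intro h
      exact absurd (Finset.mem_range.mpr (by omega)) h
  | succ M ih =>
    cases c with
    | zero => simp [P_zero]
    | succ c =>
      have hgoal : ∑ i ∈ Finset.range (c + 1 + 1),
            (-1:ℤ) ^ i * ((M+1).choose i : ℤ) * ((N + (c+1) - i).choose N : ℤ)
          = (∑ i ∈ Finset.range (c + 1 + 1),
              (-1:ℤ) ^ i * (M.choose i : ℤ) * ((N + (c+1) - i).choose N : ℤ))
            - ∑ i ∈ Finset.range (c + 1),
              (-1:ℤ) ^ i * (M.choose i : ℤ) * ((N + c - i).choose N : ℤ) := by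
        have hterm : ∀ i ∈ Finset.range (c + 1),
            (-1:ℤ) ^ (i+1) * ((M+1).choose (i+1) : ℤ) * ((N + (c+1) - (i+1)).choose N : ℤ)
            = (-1:ℤ) ^ (i+1) * (M.choose (i+1) : ℤ) * ((N + (c+1) - (i+1)).choose N : ℤ)
              - (-1:ℤ) ^ i * (M.choose i : ℤ) * ((N + c - i).choose N : ℤ) := by
          intro i hi
          rw [Nat.choose_succ_succ]
          have h1 : N + (c+1) - (i+1) = N + c - i := by omega
          rw [h1]
          push_cast
          ring
        rw [Finset.sum_range_succ' _ (c+1), Finset.sum_congr rfl hterm,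
          Finset.sum_sub_distrib,
          Finset.sum_range_succ'
            (fun i => (-1:ℤ) ^ i * (M.choose i : ℤ) * ((N + (c+1) - i).choose N : ℤ)) (c+1)]
        simp only [Nat.choose_zero_right]
        ring
      rw [hgoal, ih (c+1), ih c]
      have hc : ((M + 1 : ℕ) : ℤ) - N - 1 = ((M:ℤ) - N - 1) + 1 := by push_cast; ring
      rw [hc, P_pascal]

lemma sum_eval (m t j : ℕ) (h2 : 2 ≤ t) (htm : t ≤ m) (htj : t ≤ j) :
    ∑ k ∈ Finset.Icc 1 (2 * m),
        (-1 : ℤ) ^ (j + k + t) * C ((2 * m : ℤ) - k) ((2 * m : ℤ) - t) * C ((j : ℤ) + 1) ((k : ℤ) - 1)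
      = (-1) ^ (j + t + 1) * P ((j : ℤ) + t - 2 * m) (t - 1) := by
  have htn : t ≤ 2 * m := by omega
  rw [← Finset.sum_subset (Finset.Icc_subset_Icc_right htn)
    (fun k hk hk' => by
      have h1 : t < k := by
        simp only [Finset.mem_Icc] at hk hk'
        omega
      have h2 : k ≤ 2 * m := (Finset.mem_Icc.mp hk).2
      rw [C_zero ((2 * m : ℤ) - k) ((2 * m : ℤ) - t) (by
        push_cast
        omega)]
      ring)]
  rw [← Finset.Ico_add_one_right_eq_Icc, Finset.sum_Ico_eq_sum_range]
  have hrange : t + 1 - 1 = (t - 1) + 1 := by omega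
  rw [hrange]
  have congrstep : ∀ i ∈ Finset.range ((t-1) + 1),
      (-1 : ℤ) ^ (j + (1 + i) + t) * C ((2 * m : ℤ) - (1 + i : ℕ)) ((2 * m : ℤ) - t)
        * C ((j : ℤ) + (1:ℤ)) (((1 + i : ℕ) : ℤ) - 1)
      = (-1:ℤ)^(j+t+1) *
        ((-1:ℤ)^i * ((j+1).choose i : ℤ) * (((2*m - t) + (t-1) - i).choose (2*m - t) : ℤ)) := by
    intro i hi
    have hi' : i ≤ t - 1 := by
      simp only [Finset.mem_range] at hi
      omega
    have hc1 : (2 * m : ℤ) - (1 + i : ℕ) = ((2*m - 1 - i : ℕ) : ℤ) := by push_cast; omega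
    have hc2 : (2 * m : ℤ) - t = ((2*m - t : ℕ) : ℤ) := by push_cast; omega
    have hc3 : ((1 + i : ℕ) : ℤ) - 1 = (i : ℤ) := by push_cast; omega
    have hc4 : (j : ℤ) + 1 = ((j + 1 : ℕ) : ℤ) := by push_cast; ring
    rw [hc1, hc2, hc3, hc4, C_natCast _ _ (by omega), C_natCast _ _ (by omega)]
    have hc5 : (2*m - t) + (t-1) - i = 2*m - 1 - i := by omega
    have hc6 : j + (1 + i) + t = (j + t + 1) + i := by omega
    rw [hc5, hc6, pow_add]
    ring
  rw [Finset.sum_congr rfl congrstep, ← Finset.mul_sum, key (j+1) (2*m - t) (t-1)]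
  congr 2
  push_cast
  omega

/-- For `n = 2m`, `2 ≤ t ≤ m`: the alternating sum
`∑_{k=1}^{n} (−1)^{j+k+t} C(n−k, n−t) C(j+1, k−1)` vanishes for `n−t < j < n−1`,
and equals `−1` for `j = n−1`. -/
theorem alternating_sum_T (m t j : ℕ) (h2 : 2 ≤ t) (htm : t ≤ m) :
    (2 * m - t < j → j < 2 * m - 1 →
      ∑ k ∈ Finset.Icc 1 (2 * m),
        (-1 : ℤ) ^ (j + k + t) * C ((2 * m : ℤ) - k) ((2 * m : ℤ) - t) * C ((j : ℤ) + 1) ((k : ℤ) - 1)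
        = 0) ∧
    (j = 2 * m - 1 →
      ∑ k ∈ Finset.Icc 1 (2 * m),
        (-1 : ℤ) ^ (j + k + t) * C ((2 * m : ℤ) - k) ((2 * m : ℤ) - t) * C ((j : ℤ) + 1) ((k : ℤ) - 1)
        = -1) := by
  constructor
  · intro hj1 hj2
    have htj : t ≤ j := by omega
    rw [sum_eval m t j h2 htm htj]
    have he : ((j : ℤ) + t - 2 * m) = ((j + t - 2*m : ℕ) : ℤ) := by push_cast; omega
    rw [he, P, if_pos (Int.natCast_nonneg _)]
    rw [Int.toNat_natCast, Nat.choose_eq_zero_of_lt (by omega)]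
    simp
  · intro hj
    have htj : t ≤ j := by omega
    rw [sum_eval m t j h2 htm htj]
    have he : ((j : ℤ) + t - 2 * m) = ((t - 1 : ℕ) : ℤ) := by push_cast; omega
    rw [he, P, if_pos (Int.natCast_nonneg _), Int.toNat_natCast, Nat.choose_self]
    rw [Nat.cast_one, mul_one, ← pow_add]
    have hexp : j + t + 1 + (t - 1) = j + 2 * t := by omega
    rw [hexp, pow_add]
    have : ((-1:ℤ))^(2*t) = 1 := by
      rw [pow_mul]
      norm_num
    rw [this, mul_one]
    exact Odd.neg_one_pow ⟨m - 1, by omega⟩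
end

section
/- In the polynomial ring ℝ[u, u₁, u₂, u₃, ...] with total derivative ∂ = Σ_{j≥0} u_{j+1}·∂/∂u_j, a derivation X commutes with ∂ if and only if X = Σ_{j≥0} (∂^j f)·∂/∂u_j for some polynomial f (where u₀ = u); i.e., an evolutionary vector field is uniquely determined by its characteristic f = X(u). -/
open MvPolynomial

/-- The total derivative `∂ = Σ_j u_{j+1} ∂/∂u_j` on the differential polynomial algebra
`ℝ[u₀, u₁, u₂, …]`, i.e. the derivation sending the variable `u_j` to `u_{j+1}`. -/
noncomputable def totD : Derivation ℝ (MvPolynomial ℕ ℝ) (MvPolynomial ℕ ℝ) :=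
  MvPolynomial.mkDerivation ℝ (fun j => MvPolynomial.X (j + 1))

lemma totD_X (j : ℕ) : totD (MvPolynomial.X j) = MvPolynomial.X (j + 1) := by
  simp [totD, MvPolynomial.mkDerivation_X]

/-- A derivation `X` of the differential polynomial algebra commutes with the total
derivative `∂` if and only if it is evolutionary, i.e. `X = Σ_j (∂^j f) ∂/∂u_j` where
`f = X(u₀)` is its characteristic: an evolutionary vector field is uniquely determined
by its characteristic. -/
theorem evolutionary_iff_commutes (Xd : Derivation ℝ (MvPolynomial ℕ ℝ) (MvPolynomial ℕ ℝ)) :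
    (∀ p : MvPolynomial ℕ ℝ, Xd (totD p) = totD (Xd p)) ↔
    Xd = MvPolynomial.mkDerivation ℝ
      (fun j => (fun p => totD p)^[j] (Xd (MvPolynomial.X 0))) := by
  constructor
  · intro h
    apply MvPolynomial.derivation_ext
    intro i
    rw [MvPolynomial.mkDerivation_X]
    induction i with
    | zero => simp
    | succ n ih =>
      have hx : (MvPolynomial.X (n + 1) : MvPolynomial ℕ ℝ) = totD (MvPolynomial.X n) :=
        (totD_X n).symm
      rw [hx, h, ih, Function.iterate_succ_apply']
  · intro h p
    have hX : ∀ j, Xd (MvPolynomial.X j) = (fun p => totD p)^[j] (Xd (MvPolynomial.X 0)) := by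
      intro j; conv_lhs => rw [h, MvPolynomial.mkDerivation_X]
    have hz : ⁅Xd, totD⁆ = 0 := by
      apply MvPolynomial.derivation_ext
      intro i
      rw [Derivation.commutator_apply, totD_X, hX (i + 1), hX i, Function.iterate_succ_apply', sub_self, Derivation.zero_apply]
    have := congrArg (fun D : Derivation ℝ (MvPolynomial ℕ ℝ) (MvPolynomial ℕ ℝ) => D p) hz
    simpa [Derivation.commutator_apply, sub_eq_zero] using this
end

section
/- Let g = u₁^{ℓ−1}·γ(u) with γ smooth and ℓ an integer. Then ∂·δ_u(u·g) − (1/2)·u₁·δ_u g = −(ℓ−2)·∂( (ℓ−1)·u₂·u₁^{ℓ−3}·u·γ(u) + u₁^{ℓ−1}·( u·γ'(u) + (1/2)·γ(u) ) ), as an identity of differential polynomials (with u₁ invertible when ℓ < 3). -/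
/-- Partial derivative `∂/∂u_k` of an observable on the jet space
(coordinates `z 0 = u`, `z k = u_k`). -/
noncomputable def pd (k : ℕ) (F : (ℕ → ℝ) → ℝ) : (ℕ → ℝ) → ℝ :=
  fun z => deriv (fun s => F (Function.update z k s)) (z k)

/-- The total derivative `∂ = Σ_{j≥0} u_{j+1} ∂/∂u_j`. -/
noncomputable def TD (F : (ℕ → ℝ) → ℝ) : (ℕ → ℝ) → ℝ :=
  fun z => ∑ᶠ j : ℕ, z (j + 1) * pd j F z

/-- The variational derivative `δ_u = Σ_{k≥0} (−∂)^k ∘ ∂/∂u_k`. -/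
noncomputable def VD (F : (ℕ → ℝ) → ℝ) : (ℕ → ℝ) → ℝ :=
  fun z => ∑ᶠ k : ℕ, (-1 : ℝ) ^ k * (TD^[k] (pd k F)) z

/-!
For a first-order Lagrangian `u₁ᵐ φ(u)` the variational derivative is `u₁ᵐ φ'(u) - ∂(m u₁^(m-1) φ(u))`.
With `m = ℓ - 1` this gives, where `u₁ ≠ 0`, `δ_u(u g) = -(ℓ-2)(R + g/2)` and `u₁ δ_u g = -(ℓ-2) ∂g`,
where `R` is the expression differentiated on the right-hand side. Hence the left-hand side is
`-(ℓ-2)(∂R + ∂g/2 - ∂g/2) = -(ℓ-2) ∂R`; since `∂` is local, agreement on the open set `u₁ ≠ 0`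
is enough.
-/

open Function Set Filter Topology

lemma pd_eq_of_hasDerivAt {F : (ℕ → ℝ) → ℝ} {k : ℕ} {z : ℕ → ℝ} {f : ℝ → ℝ} {d : ℝ}
    (hd : HasDerivAt f d (z k)) (hf : ∀ t, F (update z k t) = f t) : pd k F z = d := by
  rw [pd, funext hf]
  exact hd.deriv

lemma pd_eq_zero_of_dependsOn {F : (ℕ → ℝ) → ℝ} {s : Set ℕ} (hF : DependsOn F s) {k : ℕ}
    (hk : k ∉ s) : pd k F = 0 := by
  funext z
  have hconst : (fun t => F (update z k t)) = fun _ => F z :=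
    funext fun t => hF fun i hi => update_of_ne (ne_of_mem_of_not_mem hi hk) _ _
  simp [pd, hconst]

lemma pd_congr_of_eqOn {F G : (ℕ → ℝ) → ℝ} {U : Set (ℕ → ℝ)} (hU : IsOpen U) (hFG : EqOn F G U)
    {z : ℕ → ℝ} (hz : z ∈ U) (k : ℕ) : pd k F z = pd k G z := by
  have hline : Continuous fun t => update z k t := continuous_const.update k continuous_id
  have hU' : (fun t => update z k t) ⁻¹' U ∈ 𝓝 (z k) :=
    hline.continuousAt.preimage_mem_nhds (by simpa using hU.mem_nhds hz)
  exact (eventuallyEq_of_mem hU' fun t ht => hFG ht).deriv_eq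

lemma TD_congr_of_eqOn {F G : (ℕ → ℝ) → ℝ} {U : Set (ℕ → ℝ)} (hU : IsOpen U) (hFG : EqOn F G U)
    {z : ℕ → ℝ} (hz : z ∈ U) : TD F z = TD G z := by
  simp only [TD, pd_congr_of_eqOn hU hFG hz]

lemma TD_eq_sum_range {F : (ℕ → ℝ) → ℝ} {n : ℕ} (hF : DependsOn F (Iio n)) (z : ℕ → ℝ) :
    TD F z = ∑ j ∈ Finset.range n, z (j + 1) * pd j F z := by
  refine finsum_eq_sum_of_support_subset _ fun j hj => ?_
  by_contra hjn
  simp_all [pd_eq_zero_of_dependsOn hF]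

lemma TD_zero : TD 0 = 0 := by
  funext z
  simp [TD, pd]

lemma VD_eq_of_dependsOn {F : (ℕ → ℝ) → ℝ} (hF : DependsOn F (Iio 2)) (z : ℕ → ℝ) :
    VD F z = pd 0 F z - TD (pd 1 F) z := by
  rw [VD, finsum_eq_sum_of_support_subset (s := Finset.range 2)]
  · simp [Finset.sum_range_succ, sub_eq_add_neg]
  · intro k hk
    by_contra hk2
    simp_all [pd_eq_zero_of_dependsOn hF, iterate_fixed TD_zero]

section Monomials

variable {φ φ' ψ ψ' χ χ' : ℝ → ℝ}

lemma hasDerivAt_id_mul (hφ : ∀ x, HasDerivAt φ (φ' x) x) (x : ℝ) :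
    HasDerivAt (fun x => x * φ x) (φ x + x * φ' x) x := by
  simpa using (hasDerivAt_id' x).fun_mul (hφ x)

lemma pd_one_zpow_mul (m : ℤ) :
    pd 1 (fun w => w 1 ^ m * φ (w 0)) = fun w => w 1 ^ (m - 1) * (m * φ (w 0)) := by
  funext w
  simp only [pd, update_self, update_of_ne zero_ne_one]
  rw [deriv_mul_const_field, deriv_zpow]
  ring

lemma TD_zpow_mul (hψ : ∀ x, HasDerivAt ψ (ψ' x) x) (n : ℤ) (z : ℕ → ℝ) :
    TD (fun w => w 1 ^ n * ψ (w 0)) z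
      = z 1 * (z 1 ^ n * ψ' (z 0)) + z 2 * (n * z 1 ^ (n - 1) * ψ (z 0)) := by
  have hdep : DependsOn (fun w : ℕ → ℝ => w 1 ^ n * ψ (w 0)) (Iio 2) := fun x y h => by
    simp only [h 0 (by simp), h 1 (by simp)]
  rw [TD_eq_sum_range hdep, Finset.sum_range_succ, Finset.sum_range_one,
    pd_eq_of_hasDerivAt ((hψ (z 0)).const_mul (z 1 ^ n)) fun t => rfl, pd_one_zpow_mul]
  ring

lemma VD_zpow_mul (hφ : ∀ x, HasDerivAt φ (φ' x) x) (m : ℤ) (z : ℕ → ℝ) :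
    VD (fun w => w 1 ^ m * φ (w 0)) z
      = z 1 ^ m * φ' (z 0)
        - (z 1 * (z 1 ^ (m - 1) * (m * φ' (z 0)))
          + z 2 * ((m - 1) * z 1 ^ (m - 1 - 1) * (m * φ (z 0)))) := by
  have hdep : DependsOn (fun w : ℕ → ℝ => w 1 ^ m * φ (w 0)) (Iio 2) := fun x y h => by
    simp only [h 0 (by simp), h 1 (by simp)]
  rw [VD_eq_of_dependsOn hdep, pd_eq_of_hasDerivAt ((hφ (z 0)).const_mul (z 1 ^ m)) fun t => rfl,
    pd_one_zpow_mul, TD_zpow_mul fun x => (hφ x).const_mul (m : ℝ)]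
  push_cast
  ring

lemma TD_mul_zpow_mul_add_zpow_mul (hψ : ∀ x, HasDerivAt ψ (ψ' x) x)
    (hχ : ∀ x, HasDerivAt χ (χ' x) x) (n m : ℤ) {z : ℕ → ℝ} (hz : z 1 ≠ 0) :
    TD (fun w => w 2 * w 1 ^ n * ψ (w 0) + w 1 ^ m * χ (w 0)) z
      = z 1 * (z 2 * z 1 ^ n * ψ' (z 0) + z 1 ^ m * χ' (z 0))
        + z 2 * (z 2 * (n * z 1 ^ (n - 1)) * ψ (z 0) + m * z 1 ^ (m - 1) * χ (z 0))
        + z 3 * (z 1 ^ n * ψ (z 0)) := by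
  set F := fun w : ℕ → ℝ => w 2 * w 1 ^ n * ψ (w 0) + w 1 ^ m * χ (w 0)
  have hdep : DependsOn F (Iio 3) :=
    fun x y h => by simp only [F, h 0 (by simp), h 1 (by simp), h 2 (by simp)]
  have hpd0 := pd_eq_of_hasDerivAt (F := F) (k := 0)
    (((hψ (z 0)).const_mul (z 2 * z 1 ^ n)).add ((hχ (z 0)).const_mul (z 1 ^ m))) fun t => rfl
  have hpd1 := pd_eq_of_hasDerivAt (F := F) (k := 1)
    ((((hasDerivAt_zpow n (z 1) (Or.inl hz)).const_mul (z 2)).mul_const (ψ (z 0))).add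
      ((hasDerivAt_zpow m (z 1) (Or.inl hz)).mul_const (χ (z 0)))) fun t => rfl
  have hpd2 := pd_eq_of_hasDerivAt (F := F) (k := 2)
    ((((hasDerivAt_id (z 2)).mul_const (z 1 ^ n)).mul_const (ψ (z 0))).add_const
      (z 1 ^ m * χ (z 0))) fun t => rfl
  rw [TD_eq_sum_range hdep, Finset.sum_range_succ, Finset.sum_range_succ, Finset.sum_range_one,
    hpd0, hpd1, hpd2]
  ring

/-- Only off `u₁ = 0`: integer powers of `0` break `u₁ * u₁ ^ (ℓ - 2) = u₁ ^ (ℓ - 1)`. -/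
lemma VD_mul_zpow_mul_eqOn (hφ : ∀ x, HasDerivAt φ (φ' x) x) (ℓ : ℤ) :
    EqOn (VD fun w => w 0 * (w 1 ^ (ℓ - 1) * φ (w 0)))
      (fun w => w 2 * w 1 ^ (ℓ - 3) * (-(((ℓ : ℝ) - 1) * (ℓ - 2)) * (w 0 * φ (w 0)))
        + w 1 ^ (ℓ - 1) * (-((ℓ : ℝ) - 2) * (φ (w 0) + w 0 * φ' (w 0)))) {w | w 1 ≠ 0} := by
  intro w (hw : w 1 ≠ 0)
  rw [show (fun w : ℕ → ℝ => w 0 * (w 1 ^ (ℓ - 1) * φ (w 0)))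
      = fun w => w 1 ^ (ℓ - 1) * (w 0 * φ (w 0)) from funext fun w => by ring,
    VD_zpow_mul (hasDerivAt_id_mul hφ)]
  simp only [sub_sub, zpow_sub₀ hw]
  push_cast
  field_simp
  ring

end Monomials

/-- For `g = u₁^{ℓ−1}·γ(u)`:
`∂·δ_u(u·g) − (1/2)·u₁·δ_u g = −(ℓ−2)·∂((ℓ−1)u₂u₁^{ℓ−3}uγ(u) + u₁^{ℓ−1}(uγ'(u) + γ(u)/2))`,
wherever `u₁ ≠ 0`. -/
theorem totD_varD_ug_identity (γ : ℝ → ℝ) (hγ : ContDiff ℝ (⊤ : ℕ∞) γ) (ℓ : ℤ) :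
    ∀ z : ℕ → ℝ, z 1 ≠ 0 →
      TD (VD (fun w => w 0 * (w 1 ^ (ℓ - 1) * γ (w 0)))) z
          - (1 / 2) * z 1 * VD (fun w => w 1 ^ (ℓ - 1) * γ (w 0)) z
        = -((ℓ : ℝ) - 2) *
            TD (fun w => ((ℓ : ℝ) - 1) * w 2 * w 1 ^ (ℓ - 3) * w 0 * γ (w 0)
              + w 1 ^ (ℓ - 1) * (w 0 * deriv γ (w 0) + (1 / 2) * γ (w 0))) z := by
  intro z hz
  obtain ⟨hγ₁, hγ'⟩ := contDiff_infty_iff_deriv.mp hγ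
  have dγ : ∀ x, HasDerivAt γ (deriv γ x) x := fun x => (hγ₁ x).hasDerivAt
  have dγ' : ∀ x, HasDerivAt (deriv γ) (deriv (deriv γ) x) x := fun x =>
    ((contDiff_infty_iff_deriv.mp hγ').1 x).hasDerivAt
  have duγ := hasDerivAt_id_mul dγ
  have duγ' := hasDerivAt_id_mul dγ'
  have hR : (fun w : ℕ → ℝ => ((ℓ : ℝ) - 1) * w 2 * w 1 ^ (ℓ - 3) * w 0 * γ (w 0)
        + w 1 ^ (ℓ - 1) * (w 0 * deriv γ (w 0) + (1 / 2) * γ (w 0)))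
      = fun w => w 2 * w 1 ^ (ℓ - 3) * (((ℓ : ℝ) - 1) * (w 0 * γ (w 0)))
        + w 1 ^ (ℓ - 1) * (w 0 * deriv γ (w 0) + (1 / 2) * γ (w 0)) :=
    funext fun w => by ring
  rw [TD_congr_of_eqOn (isOpen_ne_fun (continuous_apply 1) continuous_const)
      (VD_mul_zpow_mul_eqOn dγ ℓ) hz,
    TD_mul_zpow_mul_add_zpow_mul (ψ := fun x => -(((ℓ : ℝ) - 1) * (ℓ - 2)) * (x * γ x))
      (χ := fun x => -((ℓ : ℝ) - 2) * (γ x + x * deriv γ x))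
      (fun x => (duγ x).const_mul _) (fun x => ((dγ x).fun_add (duγ' x)).const_mul _) _ _ hz,
    VD_zpow_mul dγ, hR,
    TD_mul_zpow_mul_add_zpow_mul (ψ := fun x => ((ℓ : ℝ) - 1) * (x * γ x))
      (χ := fun x => x * deriv γ x + 1 / 2 * γ x)
      (fun x => (duγ x).const_mul _) (fun x => (duγ' x).fun_add ((dγ x).const_mul _)) _ _ hz]
  simp only [sub_sub, zpow_sub₀ hz]
  push_cast
  field_simp
  ring
end

section
/- Let h be a differential polynomial of order ≤ m with m > 0, possibly involving u₁^{−1}, and set n = 2m. Then ∂·δ_u(u·h) − (u·∂ + (1/2)·u₁)·δ_u h ≡ (−1)^m·(m + 1/2)·u_n·u₁·(∂²h/∂u_m²) modulo terms of order ≤ n−1. -/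
/-!
Write `h_k = ∂h/∂u_k`. Since `∂/∂u_k (u h) = u h_k + [k = 0] h`, one has
`δ(u h) = h + u δh + Σ_k (-1)^k [∂^k, u] h_k`; applying `∂`, the Leibniz rule turns the left-hand
side into `∂h + ½ u₁ δh + Σ_k (-1)^k ∂ [∂^k, u] h_k`.
Modulo order `≤ 2m - 1` only top-order terms survive: `∂^j F ≡ u_{N+j} ∂F/∂u_N` for `F` of order
`N`, so `½ u₁ δh ≡ ½ (-1)^m u₁ u_{2m} h_{mm}`; and `[∂^k, u] p ≡ k u₁ ∂^{k-1} p`, so among the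
commutator terms only `k = m` survives, contributing `(-1)^m m u₁ u_{2m} h_{mm}`.
-/

open Function Set Filter Finset
open scoped ContDiff

namespace Jet

variable {F G : (ℕ → ℝ) → ℝ} {n k : ℕ} {z : ℕ → ℝ}

def regular : Set (ℕ → ℝ) := {z | z 1 ≠ 0}

@[simp] theorem mem_regular : z ∈ regular ↔ z 1 ≠ 0 := Iff.rfl

def orderLE (n : ℕ) : Subalgebra ℝ ((ℕ → ℝ) → ℝ) where
  carrier := {F | ∀ z w : ℕ → ℝ, (∀ i ≤ n, z i = w i) → F z = F w}
  mul_mem' hF hG z w hzw := congr_arg₂ (· * ·) (hF z w hzw) (hG z w hzw)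
  add_mem' hF hG z w hzw := congr_arg₂ (· + ·) (hF z w hzw) (hG z w hzw)
  algebraMap_mem' _ _ _ _ := rfl

theorem orderLE_mono {n n' : ℕ} (h : n ≤ n') : orderLE n ≤ orderLE n' :=
  fun _ hF z w hzw => hF z w fun i hi => hzw i (hi.trans h)

theorem eval_mem_orderLE {i : ℕ} (hi : i ≤ n) : eval i ∈ orderLE n :=
  fun _ _ hzw => hzw i hi

theorem pd_eq_zero_of_lt (hF : F ∈ orderLE n) (hk : n < k) : pd k F = 0 := by
  funext z
  have : (fun s => F (update z k s)) = fun _ => F z :=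
    funext fun s => hF _ _ fun i hi => update_of_ne (by omega) _ _
  simp [pd, this]

theorem pd_mem_orderLE (hF : F ∈ orderLE n) (k : ℕ) : pd k F ∈ orderLE n := by
  rcases le_or_gt k n with hk | hk
  · intro z w hzw
    have hline : (fun s => F (update z k s)) = fun s => F (update w k s) :=
      funext fun s => hF _ _ fun i hi => by
        rcases eq_or_ne i k with rfl | hik
        · simp
        · simp [update_of_ne hik, hzw i hi]
    simp only [pd, hline, hzw k hk]
  · rw [pd_eq_zero_of_lt hF hk]
    exact zero_mem _

theorem isOpen_setOf_apply_one_ne_zero (N : ℕ) : IsOpen {v : Fin (N + 1) → ℝ | v 1 ≠ 0} :=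
  isOpen_ne.preimage (continuous_apply 1)

theorem hasDerivAt_comp_update {N : ℕ} {H : (Fin (N + 1) → ℝ) → ℝ}
    (hH : ContDiffOn ℝ ∞ H {v | v 1 ≠ 0}) {v : Fin (N + 1) → ℝ} (hv : v 1 ≠ 0)
    (k : Fin (N + 1)) :
    HasDerivAt (fun s => H (update v k s)) (fderiv ℝ H v (Pi.single k 1)) (v k) := by
  have hH' : HasFDerivAt H (fderiv ℝ H v) (update v k (v k)) := by
    rw [update_eq_self]
    exact ((hH.contDiffAt ((isOpen_setOf_apply_one_ne_zero N).mem_nhds hv)).differentiableAt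
      (by simp)).hasFDerivAt
  exact hH'.comp_hasDerivAt (v k) (hasDerivAt_update v k (v k))

theorem comp_update_eq {N : ℕ} {H : (Fin (N + 1) → ℝ) → ℝ} (hF : ∀ z, F z = H fun i => z i)
    (hk : k ≤ N) (z : ℕ → ℝ) :
    (fun s => F (update z k s)) = fun s => H (update (fun i => z i) ⟨k, by omega⟩ s) :=
  funext fun s => (hF _).trans
    (congr_arg H (update_comp_eq_of_injective z Fin.val_injective ⟨k, by omega⟩ s))

/-- Functions that are smooth on `u₁ ≠ 0` and depend on finitely many jet coordinates: the
analytic model of `Â = A[u₁⁻¹]`. Asking for a representation on `Fin (N + 1)` for all large `N`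
makes the algebra operations free of order bookkeeping. -/
def smoothJets : Subalgebra ℝ ((ℕ → ℝ) → ℝ) where
  carrier := {F | ∀ᶠ N in atTop, ∃ H : (Fin (N + 1) → ℝ) → ℝ,
    ContDiffOn ℝ ∞ H {v | v 1 ≠ 0} ∧ ∀ z, F z = H fun i => z i}
  mul_mem' hF hG := (hF.and hG).mono fun _ ⟨⟨H₁, h₁, e₁⟩, ⟨H₂, h₂, e₂⟩⟩ =>
    ⟨H₁ * H₂, h₁.mul h₂, fun z => by simp [e₁, e₂]⟩
  add_mem' hF hG := (hF.and hG).mono fun _ ⟨⟨H₁, h₁, e₁⟩, ⟨H₂, h₂, e₂⟩⟩ =>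
    ⟨H₁ + H₂, h₁.add h₂, fun z => by simp [e₁, e₂]⟩
  algebraMap_mem' c := Eventually.of_forall fun _ => ⟨fun _ => c, contDiffOn_const, fun _ => rfl⟩

theorem mem_smoothJets_of_contDiffOn {N : ℕ} (hN : 1 ≤ N) {H : (Fin (N + 1) → ℝ) → ℝ}
    (hH : ContDiffOn ℝ ∞ H {v | v 1 ≠ 0}) (hF : ∀ z, F z = H fun i => z i) :
    F ∈ smoothJets := by
  refine (eventually_ge_atTop N).mono fun N' hN' =>
    ⟨fun v => H fun i => v (Fin.castLE (by omega) i),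
      hH.comp (contDiff_pi.2 fun i => contDiff_apply ℝ ℝ _).contDiffOn fun v hv => ?_, hF⟩
  have h1 : Fin.castLE (by omega) (1 : Fin (N + 1)) = (1 : Fin (N' + 1)) := by
    ext; simp [Nat.mod_eq_of_lt, show 1 < N + 1 by omega, show 1 < N' + 1 by omega]
  simpa [h1] using hv

theorem eval_mem_smoothJets (i : ℕ) : eval i ∈ smoothJets :=
  mem_smoothJets_of_contDiffOn (N := i + 1) (by omega) (H := fun v => v ⟨i, by omega⟩)
    (contDiff_apply ℝ ℝ _).contDiffOn fun _ => rfl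

theorem eventually_mem_orderLE (hF : F ∈ smoothJets) : ∀ᶠ n in atTop, F ∈ orderLE n :=
  Eventually.mono hF fun N ⟨H, _, e⟩ z w hzw => by
    rw [e z, e w]; exact congr_arg H (funext fun i => hzw i (by omega))

theorem differentiableAt_comp_update (hF : F ∈ smoothJets) (hz : z ∈ regular) (k : ℕ) :
    DifferentiableAt ℝ (fun s => F (update z k s)) (z k) := by
  obtain ⟨N, ⟨H, hH, e⟩, hkN, h1N⟩ :=
    (hF.and ((eventually_ge_atTop k).and (eventually_ge_atTop 1))).exists
  rw [comp_update_eq e hkN]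
  have hv : (fun i : Fin (N + 1) => z i) 1 ≠ 0 := by
    simpa [Fin.val_one', Nat.mod_eq_of_lt, show 1 < N + 1 by omega] using hz
  exact (hasDerivAt_comp_update hH hv ⟨k, by omega⟩).differentiableAt

theorem pd_mem_smoothJets (hF : F ∈ smoothJets) (k : ℕ) : pd k F ∈ smoothJets := by
  refine (hF.and (eventually_ge_atTop k)).mono fun N ⟨⟨H, hH, e⟩, hkN⟩ => ?_
  set k' : Fin (N + 1) := ⟨k, by omega⟩
  refine ⟨fun v => deriv (fun s => H (update v k' s)) (v k'), ?_, fun z => ?_⟩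
  · exact ((hH.fderiv_of_isOpen (isOpen_setOf_apply_one_ne_zero N) (by simp)).clm_apply
      contDiffOn_const).congr fun v hv => (hasDerivAt_comp_update hH hv k').deriv
  · simp only [pd, comp_update_eq e hkN]
    rfl

theorem pd_congr (hFG : EqOn F G regular) (hz : z ∈ regular) (k : ℕ) : pd k F z = pd k G z := by
  refine EventuallyEq.deriv_eq ?_
  rcases eq_or_ne k 1 with rfl | hk
  · filter_upwards [isOpen_ne.mem_nhds hz] with s hs
    exact hFG (by simpa using hs)
  · exact Eventually.of_forall fun s => hFG (by simpa [update_of_ne (Ne.symm hk)] using hz)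

theorem pd_add (hF : F ∈ smoothJets) (hG : G ∈ smoothJets) (hz : z ∈ regular) (k : ℕ) :
    pd k (F + G) z = pd k F z + pd k G z :=
  deriv_add (differentiableAt_comp_update hF hz k) (differentiableAt_comp_update hG hz k)

theorem pd_mul (hF : F ∈ smoothJets) (hG : G ∈ smoothJets) (hz : z ∈ regular) (k : ℕ) :
    pd k (F * G) z = pd k F z * G z + F z * pd k G z := by
  have := ((differentiableAt_comp_update hF hz k).hasDerivAt.mul
    (differentiableAt_comp_update hG hz k).hasDerivAt).deriv
  rwa [update_eq_self] at this

theorem pd_eval (i k : ℕ) (z : ℕ → ℝ) : pd k (eval i) z = if i = k then 1 else 0 := by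
  rcases eq_or_ne i k with rfl | h
  · simp [pd]
  · simp [pd, h]

theorem pd_smul (c : ℝ) (F : (ℕ → ℝ) → ℝ) (k : ℕ) (z : ℕ → ℝ) :
    pd k (c • F) z = c * pd k F z :=
  deriv_const_mul_field c

theorem TD_apply_eq_sum (hF : F ∈ orderLE n) (z : ℕ → ℝ) :
    TD F z = ∑ j ∈ range (n + 1), z (j + 1) * pd j F z := by
  refine finsum_eq_finsetSum_of_support_subset _ fun j hj => ?_
  by_contra hjn
  simp [pd_eq_zero_of_lt hF (show n < j by simpa using hjn)] at hj

theorem TD_eq_sum (hF : F ∈ orderLE n) : TD F = ∑ j ∈ range (n + 1), eval (j + 1) * pd j F :=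
  funext fun z => by simp [TD_apply_eq_sum hF z]

theorem TD_mem_orderLE (hF : F ∈ orderLE n) : TD F ∈ orderLE (n + 1) := by
  rw [TD_eq_sum hF]
  exact sum_mem fun j hj => mul_mem (eval_mem_orderLE (by simp at hj; omega))
    (orderLE_mono n.le_succ (pd_mem_orderLE hF j))

theorem TD_mem_smoothJets (hF : F ∈ smoothJets) : TD F ∈ smoothJets := by
  obtain ⟨n, hn⟩ := (eventually_mem_orderLE hF).exists
  rw [TD_eq_sum hn]
  exact sum_mem fun j _ => mul_mem (eval_mem_smoothJets _) (pd_mem_smoothJets hF j)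

theorem TD_iterate_mem_orderLE (hF : F ∈ orderLE n) (j : ℕ) : TD^[j] F ∈ orderLE (n + j) := by
  induction j with
  | zero => exact hF
  | succ j ih => rw [iterate_succ_apply']; exact TD_mem_orderLE ih

theorem TD_iterate_mem_smoothJets (hF : F ∈ smoothJets) (j : ℕ) : TD^[j] F ∈ smoothJets := by
  induction j with
  | zero => exact hF
  | succ j ih => rw [iterate_succ_apply']; exact TD_mem_smoothJets ih

theorem TD_congr (hFG : EqOn F G regular) : EqOn (TD F) (TD G) regular :=
  fun _ hz => finsum_congr fun j => by rw [pd_congr hFG hz j]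

theorem TD_iterate_congr (hFG : EqOn F G regular) (j : ℕ) :
    EqOn (TD^[j] F) (TD^[j] G) regular := by
  induction j with
  | zero => exact hFG
  | succ j ih => simpa only [iterate_succ_apply'] using TD_congr ih

theorem TD_add (hF : F ∈ smoothJets) (hG : G ∈ smoothJets) :
    EqOn (TD (F + G)) (TD F + TD G) regular := by
  intro z hz
  obtain ⟨n, hFn, hGn⟩ := ((eventually_mem_orderLE hF).and (eventually_mem_orderLE hG)).exists
  simp only [Pi.add_apply, TD_apply_eq_sum hFn, TD_apply_eq_sum hGn,
    TD_apply_eq_sum (add_mem hFn hGn), pd_add hF hG hz, mul_add, sum_add_distrib]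

theorem TD_mul (hF : F ∈ smoothJets) (hG : G ∈ smoothJets) :
    EqOn (TD (F * G)) (TD F * G + F * TD G) regular := by
  intro z hz
  obtain ⟨n, hFn, hGn⟩ := ((eventually_mem_orderLE hF).and (eventually_mem_orderLE hG)).exists
  simp only [Pi.add_apply, Pi.mul_apply, TD_apply_eq_sum hFn, TD_apply_eq_sum hGn,
    TD_apply_eq_sum (mul_mem hFn hGn), pd_mul hF hG hz, sum_mul, mul_sum, ← sum_add_distrib]
  exact sum_congr rfl fun _ _ => by ring

theorem TD_smul (c : ℝ) (hF : F ∈ smoothJets) : TD (c • F) = c • TD F := by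
  obtain ⟨n, hn⟩ := (eventually_mem_orderLE hF).exists
  funext z
  simp only [Pi.smul_apply, smul_eq_mul, TD_apply_eq_sum hn,
    TD_apply_eq_sum (Subalgebra.smul_mem _ hn c), pd_smul, mul_sum]
  exact sum_congr rfl fun _ _ => by ring

theorem TD_zero : TD 0 = 0 :=
  funext fun z => by simp [TD, pd]

theorem TD_eval (i : ℕ) : TD (eval i) = eval (i + 1) :=
  funext fun z => by simp [TD_apply_eq_sum (eval_mem_orderLE le_rfl) z, pd_eval]

theorem TD_sub (hF : F ∈ smoothJets) (hG : G ∈ smoothJets) :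
    EqOn (TD (F - G)) (TD F - TD G) regular := fun z hz => by
  have := TD_add (sub_mem hF hG) hG hz
  simp only [sub_add_cancel, Pi.add_apply] at this
  simp [this]

theorem TD_sum {ι : Type*} (s : Finset ι) {f : ι → (ℕ → ℝ) → ℝ}
    (hf : ∀ i ∈ s, f i ∈ smoothJets) : EqOn (TD (∑ i ∈ s, f i)) (∑ i ∈ s, TD (f i)) regular := by
  classical
  induction s using Finset.induction_on with
  | empty => intro z _; simp [TD_zero]
  | insert a s ha ih =>
    intro z hz
    rw [sum_insert ha, sum_insert ha, TD_add (hf a (mem_insert_self a s))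
      (sum_mem fun i hi => hf i (mem_insert_of_mem hi)) hz, Pi.add_apply, Pi.add_apply,
      ih (fun i hi => hf i (mem_insert_of_mem hi)) hz]

/-- `F ≡ G [SMOD lowOrder n]` is the congruence modulo `Â[n]`: on `u₁ ≠ 0`, `F - G` agrees with a
function of order `≤ n`. -/
def lowOrder (n : ℕ) : Submodule ℝ ((ℕ → ℝ) → ℝ) where
  carrier := {F | ∃ a ∈ orderLE n, EqOn F a regular}
  add_mem' := fun ⟨a, ha, hFa⟩ ⟨b, hb, hGb⟩ =>
    ⟨a + b, add_mem ha hb, fun z hz => by simp [hFa hz, hGb hz]⟩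
  zero_mem' := ⟨0, zero_mem _, fun _ _ => rfl⟩
  smul_mem' c := fun ⟨a, ha, hFa⟩ =>
    ⟨c • a, Subalgebra.smul_mem _ ha c, fun z hz => by simp [hFa hz]⟩

theorem mem_lowOrder_of_mem (hF : F ∈ orderLE n) : F ∈ lowOrder n :=
  ⟨F, hF, eqOn_refl _ _⟩

theorem lowOrder_mono {n n' : ℕ} (h : n ≤ n') : lowOrder n ≤ lowOrder n' :=
  fun _ ⟨a, ha, hFa⟩ => ⟨a, orderLE_mono h ha, hFa⟩

theorem mul_mem_lowOrder (hF : F ∈ lowOrder n) (hG : G ∈ lowOrder n) : F * G ∈ lowOrder n :=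
  let ⟨a, ha, hFa⟩ := hF
  let ⟨b, hb, hGb⟩ := hG
  ⟨a * b, mul_mem ha hb, fun z hz => by simp [hFa hz, hGb hz]⟩

theorem mem_lowOrder_of_eqOn (hF : F ∈ lowOrder n) (hFG : EqOn F G regular) : G ∈ lowOrder n :=
  let ⟨a, ha, hFa⟩ := hF
  ⟨a, ha, hFG.symm.trans hFa⟩

theorem TD_mem_lowOrder (hF : F ∈ lowOrder n) : TD F ∈ lowOrder (n + 1) :=
  let ⟨a, ha, hFa⟩ := hF
  ⟨TD a, TD_mem_orderLE ha, TD_congr hFa⟩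

theorem smodEq_of_eqOn (hFG : EqOn F G regular) : F ≡ G [SMOD lowOrder n] :=
  SModEq.sub_mem.2 <| mem_lowOrder_of_eqOn (zero_mem _) fun z hz => by simp [hFG hz]

theorem smodEq_add_right_of_mem {R : (ℕ → ℝ) → ℝ} (hR : R ∈ lowOrder n) :
    F + R ≡ F [SMOD lowOrder n] :=
  SModEq.sub_mem.2 (by simpa using hR)

theorem SModEq.mul_left {c : (ℕ → ℝ) → ℝ} (hc : c ∈ lowOrder n) (h : F ≡ G [SMOD lowOrder n]) :
    c * F ≡ c * G [SMOD lowOrder n] :=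
  SModEq.sub_mem.2 (by rw [← mul_sub]; exact mul_mem_lowOrder hc (SModEq.sub_mem.1 h))

theorem SModEq.TD (hF : F ∈ smoothJets) (hG : G ∈ smoothJets) (h : F ≡ G [SMOD lowOrder n]) :
    TD F ≡ TD G [SMOD lowOrder (n + 1)] :=
  SModEq.sub_mem.2 <| mem_lowOrder_of_eqOn (TD_mem_lowOrder (SModEq.sub_mem.1 h)) (TD_sub hF hG)

theorem TD_iterate_smodEq (hF : F ∈ smoothJets) (hFn : F ∈ orderLE n) (j : ℕ) :
    TD^[j + 1] F ≡ eval (n + j + 1) * pd n F [SMOD lowOrder (n + j)] := by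
  induction j with
  | zero =>
    refine SModEq.sub_mem.2 (mem_lowOrder_of_mem ?_)
    rw [iterate_one, TD_eq_sum hFn, sum_range_succ, add_sub_cancel_right]
    exact sum_mem fun i hi =>
      mul_mem (eval_mem_orderLE (by simp at hi; omega)) (pd_mem_orderLE hFn i)
  | succ j ih =>
    have hFn' := pd_mem_smoothJets hF n
    have hstep : TD (eval (n + j + 1) * pd n F) ≡ eval (n + j + 2) * pd n F
        [SMOD lowOrder (n + j + 1)] := by
      refine (smodEq_of_eqOn (TD_mul (eval_mem_smoothJets _) hFn')).trans ?_
      rw [TD_eval]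
      exact smodEq_add_right_of_mem <| mem_lowOrder_of_mem <| mul_mem (eval_mem_orderLE le_rfl)
        (orderLE_mono (by omega) (TD_mem_orderLE (pd_mem_orderLE hFn n)))
    rw [iterate_succ_apply']
    exact (SModEq.TD (TD_iterate_mem_smoothJets hF _) (mul_mem (eval_mem_smoothJets _) hFn')
      ih).trans hstep

noncomputable def commutatorU (k : ℕ) (p : (ℕ → ℝ) → ℝ) : (ℕ → ℝ) → ℝ :=
  TD^[k] (eval 0 * p) - eval 0 * TD^[k] p

variable {p q : (ℕ → ℝ) → ℝ}

theorem commutatorU_zero (p : (ℕ → ℝ) → ℝ) : commutatorU 0 p = 0 :=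
  sub_self _

theorem commutatorU_mem_smoothJets (hp : p ∈ smoothJets) (k : ℕ) : commutatorU k p ∈ smoothJets :=
  sub_mem (TD_iterate_mem_smoothJets (mul_mem (eval_mem_smoothJets 0) hp) k)
    (mul_mem (eval_mem_smoothJets 0) (TD_iterate_mem_smoothJets hp k))

theorem commutatorU_succ (hp : p ∈ smoothJets) (k : ℕ) :
    EqOn (commutatorU (k + 1) p) (eval 1 * TD^[k] p + TD (commutatorU k p)) regular := by
  intro z hz
  have hsplit : TD^[k] (eval 0 * p) = eval 0 * TD^[k] p + commutatorU k p :=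
    (add_sub_cancel _ _).symm
  have hTD := TD_add (mul_mem (eval_mem_smoothJets 0) (TD_iterate_mem_smoothJets hp k))
    (commutatorU_mem_smoothJets hp k) hz
  have hLeibniz := TD_mul (eval_mem_smoothJets 0) (TD_iterate_mem_smoothJets hp k) hz
  rw [commutatorU, iterate_succ_apply', iterate_succ_apply', hsplit]
  simp only [Pi.sub_apply, Pi.add_apply, Pi.mul_apply, hTD, hLeibniz, TD_eval] at *
  ring

theorem commutatorU_smodEq (hp : p ∈ smoothJets) (hpn : p ∈ orderLE (n + 1)) {k : ℕ}
    (hk : k ≤ n) :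
    commutatorU (k + 1) p ≡ ((k + 1 : ℕ) : ℝ) • (eval 1 * TD^[k] p) [SMOD lowOrder (n + k)] := by
  induction k with
  | zero =>
    refine smodEq_of_eqOn fun z hz => ?_
    simp [commutatorU_succ hp 0 hz, commutatorU_zero, TD_zero]
  | succ k ih =>
    have hq := TD_iterate_mem_smoothJets hp k
    have hqn := TD_iterate_mem_orderLE hpn k
    have hTDih := SModEq.TD (commutatorU_mem_smoothJets hp _)
      (Subalgebra.smul_mem _ (mul_mem (eval_mem_smoothJets 1) hq) _) (ih (by omega))
    have hcomp : EqOn (eval 1 * TD^[k + 1] p + TD (((k + 1 : ℕ) : ℝ) • (eval 1 * TD^[k] p)))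
        (((k + 2 : ℕ) : ℝ) • (eval 1 * TD^[k + 1] p) + ((k + 1 : ℕ) : ℝ) • (eval 2 * TD^[k] p))
        regular := by
      intro z hz
      rw [TD_smul _ (mul_mem (eval_mem_smoothJets 1) hq)]
      simp only [Pi.add_apply, Pi.mul_apply, Pi.smul_apply, smul_eq_mul,
        TD_mul (eval_mem_smoothJets 1) hq hz, TD_eval, iterate_succ_apply']
      push_cast
      ring
    refine (smodEq_of_eqOn (commutatorU_succ hp (k + 1))).trans ?_
    refine ((SModEq.refl _).add hTDih).trans ((smodEq_of_eqOn hcomp).trans ?_)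
    exact smodEq_add_right_of_mem <| Submodule.smul_mem _ _ <| mem_lowOrder_of_mem <|
      mul_mem (eval_mem_orderLE (by omega)) (orderLE_mono (by omega) hqn)

theorem commutatorU_mem_lowOrder (hp : p ∈ smoothJets) (hpn : p ∈ orderLE (n + 1)) {k : ℕ}
    (hk : k ≤ n + 1) : commutatorU k p ∈ lowOrder (n + k) := by
  rcases k with _ | k
  · rw [commutatorU_zero]; exact zero_mem _
  · have hdiff := SModEq.sub_mem.1 (commutatorU_smodEq hp hpn (k := k) (by omega))
    have hlead : ((k + 1 : ℕ) : ℝ) • (eval 1 * TD^[k] p) ∈ lowOrder (n + (k + 1)) :=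
      Submodule.smul_mem _ _ <| mem_lowOrder_of_mem <| mul_mem (eval_mem_orderLE (by omega))
        (orderLE_mono (by omega) (TD_iterate_mem_orderLE hpn k))
    simpa using add_mem (lowOrder_mono (by omega) hdiff) hlead

theorem VD_apply_eq_sum (hF : F ∈ orderLE n) (z : ℕ → ℝ) :
    VD F z = ∑ k ∈ range (n + 1), (-1 : ℝ) ^ k * TD^[k] (pd k F) z := by
  refine finsum_eq_finsetSum_of_support_subset _ fun k hk => ?_
  by_contra hkn
  simp [pd_eq_zero_of_lt hF (show n < k by simpa using hkn), iterate_fixed TD_zero] at hk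

theorem VD_eq_sum (hF : F ∈ orderLE n) :
    VD F = ∑ k ∈ range (n + 1), (-1 : ℝ) ^ k • TD^[k] (pd k F) :=
  funext fun z => by simp [VD_apply_eq_sum hF z]

theorem VD_mem_smoothJets (hF : F ∈ smoothJets) : VD F ∈ smoothJets := by
  obtain ⟨n, hn⟩ := (eventually_mem_orderLE hF).exists
  rw [VD_eq_sum hn]
  exact sum_mem fun k _ =>
    Subalgebra.smul_mem _ (TD_iterate_mem_smoothJets (pd_mem_smoothJets hF k) k) _

variable {h : (ℕ → ℝ) → ℝ}

theorem TD_iterate_pd_eval_zero_mul (hh : h ∈ smoothJets) (k : ℕ) :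
    EqOn (TD^[k] (pd k (eval 0 * h)))
      (eval 0 * TD^[k] (pd k h) + commutatorU k (pd k h) + if k = 0 then h else 0) regular := by
  have hpd : EqOn (pd k (eval 0 * h)) (eval 0 * pd k h + if k = 0 then h else 0) regular :=
    fun z hz => by
      rw [pd_mul (eval_mem_smoothJets 0) hh hz, pd_eval]
      split_ifs with h0 h0' h0' <;> simp_all [eq_comm]; ring
  rcases k with _ | k
  · simpa [commutatorU_zero] using hpd
  · refine (TD_iterate_congr hpd _).trans fun z _ => ?_
    simp [commutatorU]

noncomputable def commutatorSum (n : ℕ) (h : (ℕ → ℝ) → ℝ) : (ℕ → ℝ) → ℝ :=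
  ∑ k ∈ range (n + 1), (-1 : ℝ) ^ k • commutatorU k (pd k h)

theorem commutatorSum_mem_smoothJets (hh : h ∈ smoothJets) (n : ℕ) :
    commutatorSum n h ∈ smoothJets :=
  sum_mem fun k _ => Subalgebra.smul_mem _ (commutatorU_mem_smoothJets (pd_mem_smoothJets hh k) k) _

theorem VD_eval_zero_mul (hh : h ∈ smoothJets) (hhn : h ∈ orderLE n) :
    EqOn (VD (eval 0 * h)) (h + eval 0 * VD h + commutatorSum n h) regular := fun z hz => by
  have hterm := fun k => TD_iterate_pd_eval_zero_mul hh k hz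
  simp only [VD_apply_eq_sum hhn, VD_apply_eq_sum (mul_mem (eval_mem_orderLE n.zero_le) hhn),
    hterm, commutatorSum, Pi.add_apply, Pi.mul_apply, mul_add, sum_add_distrib, mul_sum,
    Finset.sum_apply, Pi.smul_apply, smul_eq_mul]
  simp [apply_ite (fun F : (ℕ → ℝ) → ℝ => F z), mul_left_comm]
  ring

theorem TD_VD_eval_zero_mul (hh : h ∈ smoothJets) (hhn : h ∈ orderLE n) :
    EqOn (TD (VD (eval 0 * h)) - (eval 0 * TD (VD h) + (1 / 2 : ℝ) • (eval 1 * VD h)))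
      (TD h + (1 / 2 : ℝ) • (eval 1 * VD h) + TD (commutatorSum n h)) regular := fun z hz => by
  have hVD := VD_mem_smoothJets hh
  have hu := eval_mem_smoothJets 0
  simp only [Pi.sub_apply, Pi.add_apply, Pi.smul_apply, Pi.mul_apply, smul_eq_mul,
    TD_congr (VD_eval_zero_mul hh hhn) hz,
    TD_add (add_mem hh (mul_mem hu hVD)) (commutatorSum_mem_smoothJets hh n) hz,
    TD_add hh (mul_mem hu hVD) hz, TD_mul hu hVD hz, TD_eval]
  ring

theorem TD_commutatorSum (hh : h ∈ smoothJets) (n : ℕ) :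
    EqOn (TD (commutatorSum n h)) (∑ k ∈ range (n + 1), (-1 : ℝ) ^ k • TD (commutatorU k (pd k h)))
      regular := by
  have hC := fun k => commutatorU_mem_smoothJets (pd_mem_smoothJets hh k) k
  refine (TD_sum _ fun k _ => Subalgebra.smul_mem _ (hC k) _).trans fun z _ => ?_
  simp only [TD_smul _ (hC _)]

variable {m : ℕ}

theorem VD_smodEq (hh : h ∈ smoothJets) (hhm : h ∈ orderLE (m + 1)) :
    VD h ≡ (-1 : ℝ) ^ (m + 1) • (eval (2 * m + 2) * pd (m + 1) (pd (m + 1) h))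
      [SMOD lowOrder (2 * m + 1)] := by
  have htop := TD_iterate_smodEq (pd_mem_smoothJets hh (m + 1)) (pd_mem_orderLE hhm (m + 1)) m
  rw [show m + 1 + m + 1 = 2 * m + 2 by ring, show m + 1 + m = 2 * m + 1 by ring] at htop
  rw [VD_eq_sum hhm, sum_range_succ, add_comm (∑ k ∈ range (m + 1), _)]
  refine (smodEq_add_right_of_mem (sum_mem fun k hk => Submodule.smul_mem _ _
    (mem_lowOrder_of_mem ?_))).trans (SModEq.smul htop _)
  rw [Finset.mem_range] at hk
  exact orderLE_mono (by omega) (TD_iterate_mem_orderLE (pd_mem_orderLE hhm k) k)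

theorem TD_commutatorU_smodEq (hq : q ∈ smoothJets) (hqm : q ∈ orderLE (m + 1)) :
    TD (commutatorU (m + 1) q) ≡ ((m + 1 : ℕ) : ℝ) •
      (eval 2 * TD^[m] q + eval 1 * (eval (2 * m + 2) * pd (m + 1) q))
      [SMOD lowOrder (2 * m + 1)] := by
  have hlead : eval 1 * TD^[m] q ∈ smoothJets :=
    mul_mem (eval_mem_smoothJets 1) (TD_iterate_mem_smoothJets hq m)
  have hTD := SModEq.TD (commutatorU_mem_smoothJets hq _) (Subalgebra.smul_mem _ hlead _)
    (commutatorU_smodEq hq hqm le_rfl)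
  have hTDlead : EqOn (TD (((m + 1 : ℕ) : ℝ) • (eval 1 * TD^[m] q)))
      (((m + 1 : ℕ) : ℝ) • (eval 2 * TD^[m] q + eval 1 * TD^[m + 1] q)) regular := fun z hz => by
    simp only [TD_smul _ hlead, Pi.smul_apply, Pi.add_apply, Pi.mul_apply,
      TD_mul (eval_mem_smoothJets 1) (TD_iterate_mem_smoothJets hq m) hz, TD_eval,
      iterate_succ_apply', smul_eq_mul, mul_add]
  have htop := TD_iterate_smodEq hq hqm m
  rw [show m + 1 + m + 1 = 2 * m + 2 by ring, show m + 1 + m = 2 * m + 1 by ring] at htop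
  refine (SModEq.mono (lowOrder_mono (by omega)) hTD).trans ((smodEq_of_eqOn hTDlead).trans ?_)
  exact SModEq.smul ((SModEq.refl _).add
    (SModEq.mul_left (mem_lowOrder_of_mem (eval_mem_orderLE (by omega))) htop)) _

theorem TD_add_TD_commutatorSum_smodEq (hh : h ∈ smoothJets) (hhm : h ∈ orderLE (m + 1)) :
    TD h + TD (commutatorSum (m + 1) h) ≡ ((-1 : ℝ) ^ (m + 1) * (m + 1 : ℝ)) •
      (eval 1 * (eval (2 * m + 2) * pd (m + 1) (pd (m + 1) h))) [SMOD lowOrder (2 * m + 1)] := by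
  set q := pd (m + 1) h
  have hqm : q ∈ orderLE (m + 1) := pd_mem_orderLE hhm (m + 1)
  have hTDh : TD h ≡ eval (m + 2) * q [SMOD lowOrder (2 * m + 1)] :=
    SModEq.mono (lowOrder_mono (by omega)) (TD_iterate_smodEq hh hhm 0)
  have hlow : ∑ k ∈ range (m + 1), (-1 : ℝ) ^ k • TD (commutatorU k (pd k h)) ∈
      lowOrder (2 * m + 1) := sum_mem fun k hk => by
    rw [Finset.mem_range] at hk
    exact Submodule.smul_mem _ _ <| lowOrder_mono (by omega) <| TD_mem_lowOrder <|
      commutatorU_mem_lowOrder (pd_mem_smoothJets hh k) (pd_mem_orderLE hhm k) (by omega)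
  have hTDX : TD (commutatorSum (m + 1) h) ≡ (-1 : ℝ) ^ (m + 1) • TD (commutatorU (m + 1) q)
      [SMOD lowOrder (2 * m + 1)] := by
    refine (smodEq_of_eqOn (TD_commutatorSum hh (m + 1))).trans ?_
    rw [sum_range_succ, add_comm (∑ k ∈ range (m + 1), _)]
    exact smodEq_add_right_of_mem hlow
  -- If `h` has order 1 the two terms cancel (`∂h` and `∂ (u₁ h₁)` both contain `u₂ h₁`);
  -- otherwise each has order `≤ 2m + 1`.
  have hcancel : eval (m + 2) * q + ((-1 : ℝ) ^ (m + 1) * (m + 1 : ℝ)) • (eval 2 * TD^[m] q) ∈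
      lowOrder (2 * m + 1) := by
    rcases m with _ | m
    · simp
    · exact add_mem (mem_lowOrder_of_mem (mul_mem (eval_mem_orderLE (by omega))
        (orderLE_mono (by omega) hqm))) (Submodule.smul_mem _ _ (mem_lowOrder_of_mem
        (mul_mem (eval_mem_orderLE (by omega)) (orderLE_mono (by omega)
        (TD_iterate_mem_orderLE hqm _)))))
  refine (hTDh.add (hTDX.trans (SModEq.smul (TD_commutatorU_smodEq
    (pd_mem_smoothJets hh (m + 1)) hqm) _))).trans ((smodEq_of_eqOn fun z _ => ?_).trans
    (smodEq_add_right_of_mem hcancel))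
  simp only [Pi.add_apply, Pi.smul_apply, Pi.mul_apply, smul_eq_mul]
  push_cast
  ring

theorem evencob_smodEq (hh : h ∈ smoothJets) (hhm : h ∈ orderLE (m + 1)) :
    TD (VD (eval 0 * h)) - (eval 0 * TD (VD h) + (1 / 2 : ℝ) • (eval 1 * VD h)) ≡
      ((-1 : ℝ) ^ (m + 1) * ((m + 1 : ℝ) + 1 / 2)) •
        (eval 1 * (eval (2 * m + 2) * pd (m + 1) (pd (m + 1) h)))
      [SMOD lowOrder (2 * m + 1)] := by
  have hVD := SModEq.smul (SModEq.mul_left (mem_lowOrder_of_mem (eval_mem_orderLE (i := 1)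
    (n := 2 * m + 1) (by omega))) (VD_smodEq hh hhm)) (1 / 2 : ℝ)
  refine (smodEq_of_eqOn (TD_VD_eval_zero_mul hh hhm)).trans ?_
  refine (smodEq_of_eqOn fun z _ => ?_).trans
    (((TD_add_TD_commutatorSum_smodEq hh hhm).add hVD).trans (smodEq_of_eqOn fun z _ => ?_))
  · simp only [Pi.add_apply]; ring
  · simp only [Pi.add_apply, Pi.smul_apply, Pi.mul_apply, smul_eq_mul]; ring

end Jet

open Jet in
/-- Lemma (even cob): for `h` of order `≤ m`, `m > 0` (possibly involving `u₁^{−1}`),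
with `n = 2m`:
`∂·δ_u(u·h) − (u∂ + (1/2)u₁)·δ_u h ≡ (−1)^m (m + 1/2) u_n u₁ ∂²h/∂u_m²` modulo
terms of order `≤ n−1`. -/
theorem evencob (m : ℕ) (hm : 0 < m) (h : (ℕ → ℝ) → ℝ)
    (horder : ∀ z w : ℕ → ℝ, (∀ i ≤ m, z i = w i) → h z = h w)
    (hsmooth : ∃ H : (Fin (m + 1) → ℝ) → ℝ,
      ContDiffOn ℝ (⊤ : ℕ∞) H {v | v 1 ≠ 0} ∧ ∀ z : ℕ → ℝ, h z = H (fun i => z i)) :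
    ∃ a : (ℕ → ℝ) → ℝ,
      (∀ z w : ℕ → ℝ, (∀ i ≤ 2 * m - 1, z i = w i) → a z = a w) ∧
      ∀ z : ℕ → ℝ, z 1 ≠ 0 →
        TD (VD (fun w => w 0 * h w)) z
            - (z 0 * TD (VD h) z + (1 / 2) * z 1 * VD h z)
          = (-1 : ℝ) ^ m * ((m : ℝ) + 1 / 2) * z (2 * m) * z 1 * pd m (pd m h) z
            + a z := by
  obtain ⟨m, rfl⟩ : ∃ k, m = k + 1 := ⟨m - 1, by omega⟩
  obtain ⟨H, hH, hhH⟩ := hsmooth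
  obtain ⟨a, ha, hEq⟩ :=
    SModEq.sub_mem.1 (evencob_smodEq (mem_smoothJets_of_contDiffOn (by omega) hH hhH) horder)
  refine ⟨a, fun z w hzw => ha z w fun i hi => hzw i (by omega), fun z hz => ?_⟩
  have := hEq hz
  simp only [Pi.sub_apply, Pi.add_apply, Pi.smul_apply, Pi.mul_apply, smul_eq_mul, eval] at this
  show TD (VD (eval 0 * h)) z - _ = _
  rw [show 2 * (m + 1) = 2 * m + 2 by ring, ← this]
  push_cast
  ring
end

section
/- Let h be a differential polynomial of order ≤ m−1 (possibly involving u₁^{−1}) with m > 0, and set n = 2m. Then δ_u h ≡ (−1)^{m−1}·u_{n−2}·(∂²h/∂u_{m−1}²) modulo terms of order ≤ n−3. -/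
def JetOrd (r : ℕ) (F : (ℕ → ℝ) → ℝ) : Prop :=
  ∀ z w : ℕ → ℝ, (∀ i ≤ r, z i = w i) → F z = F w

lemma pd_high {r : ℕ} {F : (ℕ → ℝ) → ℝ} (hF : JetOrd r F) {j : ℕ} (hj : r < j) (z : ℕ → ℝ) :
    pd j F z = 0 := by
  have hfun : (fun s => F (Function.update z j s)) = fun _ => F z := by
    funext s
    exact hF _ _ fun i hi => Function.update_of_ne (by omega) _ _
  simp only [pd, hfun, deriv_const]

lemma pd_ord {r : ℕ} {F : (ℕ → ℝ) → ℝ} (hF : JetOrd r F) (j : ℕ) : JetOrd r (pd j F) := by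
  intro z w hzw
  by_cases hj : j ≤ r
  · have hfun : (fun s => F (Function.update z j s)) = fun s => F (Function.update w j s) := by
      funext s
      apply hF
      intro i hi
      rcases eq_or_ne i j with rfl | hij
      · simp
      · rw [Function.update_of_ne hij, Function.update_of_ne hij]
        exact hzw i hi
    simp only [pd, hfun, hzw j hj]
  · rw [pd_high hF (by omega) z, pd_high hF (by omega) w]

lemma TD_eval {r : ℕ} {F : (ℕ → ℝ) → ℝ} (hF : JetOrd r F) (z : ℕ → ℝ) :
    TD F z = ∑ i ∈ Finset.range (r + 1), z (i + 1) * pd i F z := by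
  apply finsum_eq_finset_sum_of_support_subset
  intro j hj
  simp only [Function.mem_support] at hj
  simp only [Finset.coe_range, Set.mem_Iio]
  by_contra hc
  exact hj (by rw [pd_high hF (by omega) z, mul_zero])

lemma TD_ord {r : ℕ} {F : (ℕ → ℝ) → ℝ} (hF : JetOrd r F) : JetOrd (r + 1) (TD F) := by
  intro z w hzw
  rw [TD_eval hF z, TD_eval hF w]
  apply Finset.sum_congr rfl
  intro i hi
  rw [Finset.mem_range] at hi
  rw [hzw (i + 1) (by omega), pd_ord hF i z w fun i' hi' => hzw i' (by omega)]

lemma iter_ord {r : ℕ} {F : (ℕ → ℝ) → ℝ} (hF : JetOrd r F) (k : ℕ) : JetOrd (r + k) (TD^[k] F) := by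
  induction k with
  | zero => exact hF
  | succ k ih =>
      rw [Function.iterate_succ_apply']
      exact TD_ord ih

lemma TD_zero_s15 : TD (fun _ => (0 : ℝ)) = fun _ => 0 := by
  funext z
  simp [TD, pd]

lemma iter_zero (k : ℕ) : TD^[k] (fun _ => (0 : ℝ)) = fun _ => 0 := by
  induction k with
  | zero => rfl
  | succ k ih => rw [Function.iterate_succ_apply, TD_zero_s15, ih]

lemma VD_eval {M : ℕ} {h : (ℕ → ℝ) → ℝ} (hOrd : JetOrd M h) (z : ℕ → ℝ) :
    VD h z = ∑ k ∈ Finset.range (M + 1), (-1 : ℝ) ^ k * TD^[k] (pd k h) z := by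
  apply finsum_eq_finset_sum_of_support_subset
  intro k hk
  simp only [Function.mem_support] at hk
  simp only [Finset.coe_range, Set.mem_Iio]
  by_contra hc
  apply hk
  have hz : pd k h = fun _ => (0 : ℝ) := funext (pd_high hOrd (by omega))
  rw [hz, iter_zero]
  simp

lemma pd_top {rc re t : ℕ} (c e : (ℕ → ℝ) → ℝ) (hc : JetOrd rc c) (he : JetOrd re e)
    (htc : rc < t) (hte : re < t) (z : ℕ → ℝ) :
    pd t (fun z => z t * c z + e z) z = c z := by
  have h1 : (fun s => Function.update z t s t * c (Function.update z t s)
      + e (Function.update z t s)) = fun s => s * c z + e z := by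
    funext s
    rw [Function.update_self]
    rw [hc (Function.update z t s) z fun i hi => Function.update_of_ne (by omega) _ _,
        he (Function.update z t s) z fun i hi => Function.update_of_ne (by omega) _ _]
  simp only [pd]
  rw [h1]
  have hd := (((hasDerivAt_id (z t)).mul_const (c z)).add_const (e z)).deriv
  simpa using hd

lemma decomp {M : ℕ} {F : (ℕ → ℝ) → ℝ} (hF : JetOrd M F) :
    ∀ j, ∃ E, JetOrd (M + j) E ∧ ∀ z, TD^[j + 1] F z = z (M + j + 1) * pd M F z + E z := by
  intro j
  induction j with
  | zero =>
      refine ⟨fun z => ∑ i ∈ Finset.range M, z (i + 1) * pd i F z, ?_, ?_⟩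
      · intro z w hzw
        apply Finset.sum_congr rfl
        intro i hi
        rw [Finset.mem_range] at hi
        rw [hzw (i + 1) (by omega), pd_ord hF i z w fun i' hi' => hzw i' (by omega)]
      · intro z
        rw [Function.iterate_one, TD_eval hF z, Finset.sum_range_succ]
        ring
  | succ j ih =>
      obtain ⟨E, hE, heq⟩ := ih
      set G := TD^[j + 1] F with hGdef
      have hGeq : G = fun z => z (M + j + 1) * pd M F z + E z := funext heq
      have hG : JetOrd (M + j + 1) G := iter_ord hF (j + 1)
      refine ⟨fun z => ∑ i ∈ Finset.range (M + j + 1), z (i + 1) * pd i G z, ?_, ?_⟩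
      · intro z w hzw
        apply Finset.sum_congr rfl
        intro i hi
        rw [Finset.mem_range] at hi
        rw [hzw (i + 1) (by omega), pd_ord hG i z w fun i' hi' => hzw i' (by omega)]
      · intro z
        have htop : pd (M + j + 1) G z = pd M F z := by
          rw [hGeq]
          exact pd_top (pd M F) E (pd_ord hF M) hE (by omega) (by omega) z
        rw [Function.iterate_succ_apply', TD_eval hG z, Finset.sum_range_succ, htop]
        exact add_comm _ _

/-- Lemma (odd cob): for `h` of order `≤ m−1`, `m > 0` (possibly involving `u₁^{−1}`),
with `n = 2m`:
`δ_u h ≡ (−1)^{m−1} u_{n−2} ∂²h/∂u_{m−1}²` modulo terms of order `≤ n−3`. -/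
theorem oddcob (m : ℕ) (hm : 0 < m) (h : (ℕ → ℝ) → ℝ)
    (horder : ∀ z w : ℕ → ℝ, (∀ i ≤ m - 1, z i = w i) → h z = h w)
    (hsmooth : ∃ H : (Fin m → ℝ) → ℝ,
      ContDiffOn ℝ (⊤ : ℕ∞) H {v | ∀ h1 : 1 < m, v ⟨1, h1⟩ ≠ 0} ∧
        ∀ z : ℕ → ℝ, h z = H (fun i => z i)) :
    ∃ a : (ℕ → ℝ) → ℝ,
      (∀ z w : ℕ → ℝ, (∀ i ≤ 2 * m - 3, z i = w i) → a z = a w) ∧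
      ∀ z : ℕ → ℝ, z 1 ≠ 0 →
        VD h z
          = (-1 : ℝ) ^ (m - 1) * z (2 * m - 2) * pd (m - 1) (pd (m - 1) h) z + a z := by
  clear hsmooth
  obtain ⟨m', rfl⟩ : ∃ m', m = m' + 1 := ⟨m - 1, by omega⟩
  have hOrd : JetOrd m' h := horder
  have hF : JetOrd m' (pd m' h) := pd_ord hOrd m'
  have hdec : ∃ E, JetOrd (2 * (m' + 1) - 3) E ∧
      ∀ z, TD^[m'] (pd m' h) z = z (2 * m') * pd m' (pd m' h) z + E z := by
    rcases Nat.eq_zero_or_pos m' with rfl | hpos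
    · refine ⟨fun z => pd 0 h z - z 0 * pd 0 (pd 0 h) z, ?_, ?_⟩
      · intro z w hzw
        show pd 0 h z - z 0 * pd 0 (pd 0 h) z = pd 0 h w - w 0 * pd 0 (pd 0 h) w
        rw [hF z w fun i hi => hzw i (by omega), hzw 0 (by omega),
            pd_ord hF 0 z w fun i hi => hzw i (by omega)]
      · intro z
        show pd 0 h z = z 0 * pd 0 (pd 0 h) z + (pd 0 h z - z 0 * pd 0 (pd 0 h) z)
        ring
    · obtain ⟨m'', rfl⟩ : ∃ m'', m' = m'' + 1 := ⟨m' - 1, by omega⟩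
      obtain ⟨E, hE, heq⟩ := decomp hF m''
      refine ⟨E, ?_, ?_⟩
      · have hco : 2 * (m'' + 1 + 1) - 3 = m'' + 1 + m'' := by omega
        rw [hco]; exact hE
      · intro z
        have h1 : 2 * (m'' + 1) = m'' + 1 + m'' + 1 := by omega
        rw [h1]
        exact heq z
  obtain ⟨E, hE, heq⟩ := hdec
  refine ⟨fun z => VD h z - (-1 : ℝ) ^ m' * z (2 * m') * pd m' (pd m' h) z, ?_, ?_⟩
  · intro z w hzw
    show VD h z - (-1 : ℝ) ^ m' * z (2 * m') * pd m' (pd m' h) z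
        = VD h w - (-1 : ℝ) ^ m' * w (2 * m') * pd m' (pd m' h) w
    have hVDz := VD_eval hOrd z
    have hVDw := VD_eval hOrd w
    rw [Finset.sum_range_succ] at hVDz hVDw
    rw [hVDz, hVDw, heq z, heq w]
    have hsum : ∑ k ∈ Finset.range m', (-1 : ℝ) ^ k * TD^[k] (pd k h) z
        = ∑ k ∈ Finset.range m', (-1 : ℝ) ^ k * TD^[k] (pd k h) w := by
      apply Finset.sum_congr rfl
      intro k hk
      rw [Finset.mem_range] at hk
      rw [iter_ord (pd_ord hOrd k) k z w fun i hi => hzw i (by omega)]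
    have hc : pd m' (pd m' h) z = pd m' (pd m' h) w :=
      pd_ord hF m' z w fun i hi => hzw i (by omega)
    have hEzw : E z = E w := hE z w hzw
    rw [hsum, hc, hEzw]
    ring
  · intro z hz
    have h1 : m' + 1 - 1 = m' := by omega
    have h2 : 2 * (m' + 1) - 2 = 2 * m' := by omega
    rw [h1, h2]
    ring
end

section
/- Suppose g = u₁^ℓ·t(u) and f = u₁^ℓ·s(u) for smooth functions s, t and an integer ℓ > 2, and suppose the pair satisfies e₀ − ∂e₁ = 0, where e₁ = ∂(f−ug)/∂u₁ − (5/2)u₁·∂g/∂u₂ and e₀ = ∂(f−ug)/∂u − (3/2)u₁·∂g/∂u₁ + (3/2)g. Then s(u) = u·t(u) for all u, and moreover g = 0. -/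
open Function Finset

lemma pd_eq_zero_of_update_eq {F : (ℕ → ℝ) → ℝ} {k : ℕ}
    (hF : ∀ z a, F (update z k a) = F z) : pd k F = 0 := by
  funext z
  simp only [pd, hF, deriv_const, Pi.zero_apply]

lemma TD_eq_sum_of_update_eq {F : (ℕ → ℝ) → ℝ} {n : ℕ}
    (hF : ∀ k, n ≤ k → ∀ z a, F (update z k a) = F z) (z : ℕ → ℝ) :
    TD F z = ∑ j ∈ range n, z (j + 1) * pd j F z := by
  refine finsum_eq_sum_of_support_subset _ fun j hj => ?_
  by_contra hjn
  have hk : n ≤ j := by simpa using hjn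
  exact hj (by simp [pd_eq_zero_of_update_eq (hF j hk)])

section JetMonomial

variable (m : ℕ) (φ : ℝ → ℝ) (z : ℕ → ℝ)

lemma pd_zero_pow_mul : pd 0 (fun w => w 1 ^ m * φ (w 0)) z = z 1 ^ m * deriv φ (z 0) := by
  simp only [pd, update_self, update_of_ne one_ne_zero]
  exact deriv_const_mul_field _

lemma pd_one_pow_mul :
    pd 1 (fun w => w 1 ^ m * φ (w 0)) z = m * z 1 ^ (m - 1) * φ (z 0) := by
  simp only [pd, update_self, update_of_ne zero_ne_one]
  rw [deriv_mul_const (differentiableAt_pow m), deriv_pow_field]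

lemma pow_mul_update_of_two_le {k : ℕ} (hk : 2 ≤ k) (a : ℝ) :
    update z k a 1 ^ m * φ (update z k a 0) = z 1 ^ m * φ (z 0) := by
  rw [update_of_ne (by omega), update_of_ne (by omega)]

lemma pd_pow_mul_of_two_le {k : ℕ} (hk : 2 ≤ k) : pd k (fun w => w 1 ^ m * φ (w 0)) = 0 :=
  pd_eq_zero_of_update_eq fun z => pow_mul_update_of_two_le m φ z hk

lemma TD_pow_mul : TD (fun w => w 1 ^ m * φ (w 0)) z
    = z 1 ^ (m + 1) * deriv φ (z 0) + m * z 2 * z 1 ^ (m - 1) * φ (z 0) := by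
  rw [TD_eq_sum_of_update_eq (n := 2) fun _ hk z => pow_mul_update_of_two_le m φ z hk,
    sum_range_succ, sum_range_one, pd_zero_pow_mul, pd_one_pow_mul]
  ring

end JetMonomial

lemma pd_sub_TD_pd_of_pow_mul {ψ t : ℝ → ℝ} {ℓ : ℕ} (hℓ : 1 ≤ ℓ) {h g : (ℕ → ℝ) → ℝ}
    (hh : h = fun w => w 1 ^ ℓ * ψ (w 0)) (hg : g = fun w => w 1 ^ ℓ * t (w 0)) (z : ℕ → ℝ) :
    pd 0 h z - 3 / 2 * z 1 * pd 1 g z + 3 / 2 * g z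
        - TD (fun w => pd 1 h w - 5 / 2 * w 1 * pd 2 g w) z
      = (1 - ℓ) * z 1 ^ ℓ * deriv ψ (z 0) - 3 / 2 * (ℓ - 1) * z 1 ^ ℓ * t (z 0)
        - ℓ * (ℓ - 1) * z 2 * z 1 ^ (ℓ - 2) * ψ (z 0) := by
  obtain ⟨k, rfl⟩ : ∃ k, ℓ = k + 1 := ⟨ℓ - 1, by omega⟩
  have h1 : (fun w => pd 1 h w - 5 / 2 * w 1 * pd 2 g w)
      = fun w => w 1 ^ k * ((k + 1 : ℕ) * ψ (w 0)) := by
    funext w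
    rw [hh, hg, pd_one_pow_mul, pd_pow_mul_of_two_le _ _ le_rfl, Pi.zero_apply,
      Nat.add_sub_cancel]
    ring
  rw [h1, TD_pow_mul _ (fun u => (k + 1 : ℕ) * ψ u), deriv_const_mul_field', hh, hg,
    pd_zero_pow_mul, pd_one_pow_mul, Nat.add_sub_cancel, show k + 1 - 2 = k - 1 by omega]
  push_cast
  ring

theorem degree_ell_cocycle_vanishes_general (s t : ℝ → ℝ)
    (ℓ : ℕ) (hℓ : 2 < ℓ)
    (f g e0 e1 : (ℕ → ℝ) → ℝ)
    (hf : f = fun z => z 1 ^ ℓ * s (z 0))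
    (hg : g = fun z => z 1 ^ ℓ * t (z 0))
    (he1 : e1 = fun z => pd 1 (fun w => f w - w 0 * g w) z - (5 / 2) * z 1 * pd 2 g z)
    (he0 : e0 = fun z =>
      pd 0 (fun w => f w - w 0 * g w) z - (3 / 2) * z 1 * pd 1 g z + (3 / 2) * g z)
    (hS : ∀ z : ℕ → ℝ, e0 z - TD e1 z = 0) :
    (∀ u : ℝ, s u = u * t u) ∧ (∀ u : ℝ, t u = 0) ∧ (∀ z : ℕ → ℝ, g z = 0) := by
  set ψ : ℝ → ℝ := fun u => s u - u * t u with hψ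
  have hfg : (fun w => f w - w 0 * g w) = fun w => w 1 ^ ℓ * ψ (w 0) := by
    funext w; simp only [hf, hg, hψ]; ring
  have hres : ∀ u c : ℝ,
      (1 - ℓ) * deriv ψ u - 3 / 2 * (ℓ - 1) * t u - ℓ * (ℓ - 1) * c * ψ u = 0 := fun u c => by
    have h := hS fun n => if n = 0 then u else if n = 2 then c else 1
    simp only [he0, he1] at h
    rw [pd_sub_TD_pd_of_pow_mul (by omega) hfg hg] at h
    simpa using h
  have hL : (ℓ : ℝ) - 1 ≠ 0 := sub_ne_zero.mpr (by norm_cast; omega)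
  have hψ0 : ψ = 0 := funext fun u =>
    (mul_eq_zero.mp (by linear_combination hres u 0 - hres u 1)).resolve_left
      (mul_ne_zero (by positivity) hL)
  have ht0 : ∀ u, t u = 0 := fun u => by
    have h := hres u 0
    rw [hψ0, _root_.deriv_zero, Pi.zero_apply] at h
    exact (mul_eq_zero.mp (by linear_combination -(2 / 3) * h)).resolve_left hL
  refine ⟨fun u => by simpa [hψ, ht0] using congrFun hψ0 u, ht0, fun z => by simp [hg, ht0]⟩

/-- For `g = u₁^ℓ t(u)`, `f = u₁^ℓ s(u)` with `ℓ > 2`, suppose `e₀ − ∂e₁ = 0` where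
`e₁ = ∂(f−ug)/∂u₁ − (5/2)u₁ ∂g/∂u₂` and `e₀ = ∂(f−ug)/∂u − (3/2)u₁ ∂g/∂u₁ + (3/2)g`.
Then `s(u) = u·t(u)` for all `u`, and moreover `g = 0`. -/
theorem degree_ell_cocycle_vanishes (s t : ℝ → ℝ)
    (hs : ContDiff ℝ (⊤ : ℕ∞) s) (ht : ContDiff ℝ (⊤ : ℕ∞) t)
    (ℓ : ℕ) (hℓ : 2 < ℓ)
    (f g e0 e1 : (ℕ → ℝ) → ℝ)
    (hf : f = fun z => z 1 ^ ℓ * s (z 0))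
    (hg : g = fun z => z 1 ^ ℓ * t (z 0))
    (he1 : e1 = fun z => pd 1 (fun w => f w - w 0 * g w) z - (5 / 2) * z 1 * pd 2 g z)
    (he0 : e0 = fun z =>
      pd 0 (fun w => f w - w 0 * g w) z - (3 / 2) * z 1 * pd 1 g z + (3 / 2) * g z)
    (hS : ∀ z : ℕ → ℝ, e0 z - TD e1 z = 0) :
    (∀ u : ℝ, s u = u * t u) ∧ (∀ u : ℝ, t u = 0) ∧ (∀ z : ℕ → ℝ, g z = 0) :=
  degree_ell_cocycle_vanishes_general s t ℓ hℓ f g e0 e1 hf hg he1 he0 hS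
end
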